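/- arXiv:1407.3718 — 3 statements merged into one kernel-verified Lean document; each statement's English description precedes it below -/
import Mathlib

section
/- For every ε > 0, the function f_G : ℝ → ℝ satisfies |f_G(x + y) − f_G(x) − f_G(y)| ≤ ε(|x| + |y|) for all x, y ∈ ℝ. -/
/-!
Since `ζ` is additive on `(-1, 1)`, the `k`-th term of `f_G(x + y) - f_G(x) - f_G(y)` vanishes as
long as `2ᵏ (|x| + |y|) < 1`. Every other term is at most `3 (ε / 6) 2⁻ᵏ` in absolute value, and the
tail of these bounds starting at the least `N` with `2ᴺ (|x| + |y|) ≥ 1` sums to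
`ε 2⁻ᴺ ≤ ε (|x| + |y|)`. The argument only uses that `ζ` is bounded and additive near `0`.
-/

/-- Gajda's function `ζ`. -/
noncomputable def zeta (ε : ℝ) (x : ℝ) : ℝ :=
  if 1 ≤ x then ε / 6 else if -1 < x then ε / 6 * x else -(ε / 6)

/-- Gajda's function `f_G x = ∑ₖ 2⁻ᵏ ζ(2ᵏ x)`. -/
noncomputable def fG (ε : ℝ) (x : ℝ) : ℝ := ∑' k : ℕ, zeta ε (2 ^ k * x) / 2 ^ k

noncomputable def dyadicSum (φ : ℝ → ℝ) (x : ℝ) : ℝ := ∑' k : ℕ, φ (2 ^ k * x) / 2 ^ k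

lemma abs_tsum_le_of_eq_zero_of_abs_le {f : ℕ → ℝ} {C : ℝ} {N : ℕ}
    (hzero : ∀ k < N, f k = 0) (hle : ∀ k, |f k| ≤ C / 2 ^ k) :
    |∑' k, f k| ≤ 2 * C / 2 ^ N := by
  have hsum : Summable f := by
    refine Summable.of_norm_bounded (summable_geometric_two' (2 * C)) fun k => ?_
    rw [Real.norm_eq_abs]
    exact (hle k).trans_eq (by ring)
  rw [← hsum.sum_add_tsum_nat_add N,
    Finset.sum_eq_zero fun k hk => hzero k (Finset.mem_range.1 hk), zero_add]
  refine tsum_of_norm_bounded (f := fun k => f (k + N)) (hasSum_geometric_two' (2 * C / 2 ^ N))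
    fun k => ?_
  rw [Real.norm_eq_abs]
  exact (hle (k + N)).trans_eq (by rw [pow_add]; ring)

lemma exists_pow_two_mul_ge_one {s : ℝ} (hs : 0 < s) :
    ∃ N : ℕ, 1 ≤ 2 ^ N * s ∧ ∀ k < N, 2 ^ k * s < 1 := by
  have hex : ∃ n : ℕ, 1 ≤ 2 ^ n * s := by
    obtain ⟨n, hn⟩ := pow_unbounded_of_one_lt s⁻¹ one_lt_two
    exact ⟨n, by simpa [hs.ne'] using (inv_le_iff_one_le_mul₀ hs).1 hn.le⟩
  classical
  exact ⟨Nat.find hex, Nat.find_spec hex, fun k hk => not_le.1 (Nat.find_min hex hk)⟩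

section DyadicSum

variable {φ : ℝ → ℝ} {M : ℝ}

lemma summable_dyadicSum (hφ : ∀ t, |φ t| ≤ M) (x : ℝ) :
    Summable fun k : ℕ => φ (2 ^ k * x) / 2 ^ k := by
  refine Summable.of_norm_bounded (summable_geometric_two' (2 * M)) fun k => ?_
  rw [Real.norm_eq_abs, abs_div, abs_of_pos (by positivity : (0 : ℝ) < 2 ^ k)]
  exact (div_le_div_of_nonneg_right (hφ _) (by positivity)).trans_eq (by ring)

lemma dyadicSum_add_sub_sub (hφ : ∀ t, |φ t| ≤ M) (x y : ℝ) :
    dyadicSum φ (x + y) - dyadicSum φ x - dyadicSum φ y =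
      ∑' k : ℕ, (φ (2 ^ k * (x + y)) - φ (2 ^ k * x) - φ (2 ^ k * y)) / 2 ^ k := by
  simp only [sub_div]
  exact ((((summable_dyadicSum hφ _).hasSum.sub (summable_dyadicSum hφ x).hasSum).sub
    (summable_dyadicSum hφ y).hasSum).tsum_eq).symm

theorem abs_dyadicSum_add_sub_sub_le (hφ : ∀ t, |φ t| ≤ M)
    (hadd : ∀ a b, |a| + |b| < 1 → φ (a + b) = φ a + φ b) (x y : ℝ) :
    |dyadicSum φ (x + y) - dyadicSum φ x - dyadicSum φ y| ≤ 6 * M * (|x| + |y|) := by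
  rcases (add_nonneg (abs_nonneg x) (abs_nonneg y)).eq_or_lt with hs | hs
  · have hx : x = 0 := abs_eq_zero.1 (by linarith [abs_nonneg x, abs_nonneg y])
    have hy : y = 0 := abs_eq_zero.1 (by linarith [abs_nonneg x, abs_nonneg y])
    have hφ0 : φ 0 = 0 := by simpa using hadd 0 0 (by norm_num)
    simp [hx, hy, dyadicSum, hφ0]
  have hM : 0 ≤ M := (abs_nonneg _).trans (hφ 0)
  obtain ⟨N, hN, hlt⟩ := exists_pow_two_mul_ge_one hs
  rw [dyadicSum_add_sub_sub hφ]
  calc _ ≤ 2 * (3 * M) / 2 ^ N := abs_tsum_le_of_eq_zero_of_abs_le (fun k hk => ?_) (fun k => ?_)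
    _ ≤ 6 * M * (|x| + |y|) := by
      rw [div_le_iff₀ (by positivity)]
      nlinarith
  · have hsmall : |2 ^ k * x| + |2 ^ k * y| < 1 := by
      rw [abs_mul, abs_mul, abs_of_pos (by positivity : (0 : ℝ) < 2 ^ k), ← mul_add]
      exact hlt k hk
    rw [mul_add, hadd _ _ hsmall]
    ring
  · rw [abs_div, abs_of_pos (by positivity : (0 : ℝ) < 2 ^ k)]
    refine div_le_div_of_nonneg_right ?_ (by positivity)
    have h₁ := abs_le.1 (hφ (2 ^ k * (x + y)))
    have h₂ := abs_le.1 (hφ (2 ^ k * x))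
    have h₃ := abs_le.1 (hφ (2 ^ k * y))
    exact abs_le.2 ⟨by linarith, by linarith⟩

end DyadicSum

lemma abs_zeta_le {ε : ℝ} (hε : 0 ≤ ε) (t : ℝ) : |zeta ε t| ≤ ε / 6 := by
  unfold zeta
  split_ifs with h₁ h₂
  · exact (abs_of_nonneg (by positivity)).le
  · rw [abs_mul, abs_of_nonneg (by positivity : 0 ≤ ε / 6)]
    exact mul_le_of_le_one_right (by positivity) (abs_le.2 ⟨h₂.le, (not_le.1 h₁).le⟩)
  · rw [abs_neg, abs_of_nonneg (by positivity)]

lemma zeta_add {ε a b : ℝ} (hab : |a| + |b| < 1) : zeta ε (a + b) = zeta ε a + zeta ε b := by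
  have ha := abs_lt.1 ((le_add_of_nonneg_right (abs_nonneg b)).trans_lt hab)
  have hb := abs_lt.1 ((le_add_of_nonneg_left (abs_nonneg a)).trans_lt hab)
  have hab' := abs_lt.1 ((abs_add_le a b).trans_lt hab)
  unfold zeta
  rw [if_neg (by linarith), if_pos (by linarith), if_neg (by linarith), if_pos (by linarith),
    if_neg (by linarith), if_pos (by linarith)]
  ring

/-- Gajda's function satisfies `|f_G(x+y) - f_G x - f_G y| ≤ ε (|x| + |y|)`. -/
theorem stmt1 (ε : ℝ) (hε : 0 < ε) (x y : ℝ) :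
    |fG ε (x + y) - fG ε x - fG ε y| ≤ ε * (|x| + |y|) := by
  have hfG : fG ε = dyadicSum (zeta ε) := rfl
  simpa only [hfG, show 6 * (ε / 6) = ε by ring] using
    abs_dyadicSum_add_sub_sub_le (abs_zeta_le hε.le) (fun _ _ => zeta_add) x y
end

section
/- Let S be a real normed vector space, B a Banach space, n a positive integer, ε > 0 and r > 1. Suppose g : S^n → B is a symmetric function such that ‖D_n g(x_1, …, x_{n+1})‖ ≤ ε ‖x_1‖^r ⋯ ‖x_{n−1}‖^r (‖x_n‖^r + ‖x_{n+1}‖^r) for all x_1, …, x_{n+1} ∈ S. Then a(y) := lim_{k→∞} 2^{nk} g(2^{-k} y) defines a symmetric n-additive mapping a : S^n → B, it satisfies ‖g(x_1, …, x_n) − a(x_1, …, x_n)‖ ≤ ε · 2^{(n−1)(r−1)+1}/|2^r − 2| · ‖x_1‖^r ⋯ ‖x_n‖^r for all x_1, …, x_n ∈ S \ {0}, and it is the unique n-additive mapping with this property. -/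
open Finset Filter

set_option linter.unusedSectionVars false
set_option maxHeartbeats 1000000


/-- The Cauchy difference operator `D_n` for a function of `n = m + 1` variables. -/
def Dop {S B : Type*} [AddCommSemigroup S] [AddCommGroup B] (m : ℕ)
    (g : (Fin (m + 1) → S) → B) (z : Fin (m + 2) → S) : B :=
  g (Function.update (fun i : Fin (m + 1) => z i.castSucc) (Fin.last m)
      (z (Fin.castSucc (Fin.last m)) + z (Fin.last (m + 1))))
    - g (fun i : Fin (m + 1) => z i.castSucc)
    - g (Function.update (fun i : Fin (m + 1) => z i.castSucc) (Fin.last m)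
      (z (Fin.last (m + 1))))


section AuxHU

variable {S B : Type*} [NormedAddCommGroup S] [NormedSpace ℝ S]
  [NormedAddCommGroup B] [NormedSpace ℝ B]

lemma aux_norm_smul_rpow (r c : ℝ) (hc : 0 ≤ c) (w : S) :
    ‖c • w‖ ^ r = c ^ r * ‖w‖ ^ r := by
  rw [norm_smul, Real.norm_eq_abs, abs_of_nonneg hc, Real.mul_rpow hc (norm_nonneg w)]

lemma aux_pow_rpow (r : ℝ) (k : ℕ) : ((2:ℝ) ^ k) ^ r = ((2:ℝ) ^ r) ^ k := by
  rw [← Real.rpow_natCast 2 k, ← Real.rpow_natCast ((2:ℝ)^r) k, ← Real.rpow_mul (by norm_num),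
    ← Real.rpow_mul (by norm_num), mul_comm]

lemma aux_norm_inv_pow_smul (r : ℝ) (k : ℕ) (w : S) :
    ‖((2:ℝ) ^ k)⁻¹ • w‖ ^ r = (((2:ℝ) ^ r)⁻¹) ^ k * ‖w‖ ^ r := by
  rw [aux_norm_smul_rpow r _ (by positivity) w, Real.inv_rpow (by positivity),
    aux_pow_rpow, inv_pow]

lemma aux_half (r : ℝ) (w : S) : ‖(2:ℝ)⁻¹ • w‖ ^ r = (((2:ℝ) ^ r)⁻¹) * ‖w‖ ^ r := by
  rw [aux_norm_smul_rpow r _ (by norm_num) w, Real.inv_rpow (by norm_num)]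

lemma aux_prod_smul (r : ℝ) (k N : ℕ) (x : Fin N → S) :
    ∏ i, ‖((2:ℝ) ^ k)⁻¹ • x i‖ ^ r
      = ((((2:ℝ) ^ r)⁻¹) ^ k) ^ N * ∏ i, ‖x i‖ ^ r := by
  calc ∏ i, ‖((2:ℝ) ^ k)⁻¹ • x i‖ ^ r
      = ∏ i, ((((2:ℝ) ^ r)⁻¹) ^ k * ‖x i‖ ^ r) :=
        Finset.prod_congr rfl (fun i _ => aux_norm_inv_pow_smul r k (x i))
    _ = ((((2:ℝ) ^ r)⁻¹) ^ k) ^ N * ∏ i, ‖x i‖ ^ r := by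
        rw [Finset.prod_mul_distrib, Finset.prod_const, Finset.card_univ, Fintype.card_fin]

lemma aux_smul_update {N : ℕ} (c : ℝ) (x : Fin N → S) (j : Fin N) (w : S) :
    (fun i => c • (Function.update x j w) i) = Function.update (fun i => c • x i) j (c • w) := by
  funext i
  rcases eq_or_ne i j with rfl | hi
  · rw [Function.update_self, Function.update_self]
  · rw [Function.update_of_ne hi, Function.update_of_ne hi]

lemma aux_keyD (m : ℕ) (ε r : ℝ) (g : (Fin (m+1) → S) → B)
    (hgD : ∀ z : Fin (m + 2) → S,
      ‖Dop m g z‖ ≤ ε * (∏ i : Fin m, ‖z i.castSucc.castSucc‖ ^ r) *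
        (‖z (Fin.castSucc (Fin.last m))‖ ^ r + ‖z (Fin.last (m + 1))‖ ^ r))
    (x : Fin (m+1) → S) (u v : S) :
    ‖g (Function.update x (Fin.last m) (u + v)) - g (Function.update x (Fin.last m) u)
      - g (Function.update x (Fin.last m) v)‖
      ≤ ε * (∏ i : Fin m, ‖x i.castSucc‖ ^ r) * (‖u‖ ^ r + ‖v‖ ^ r) := by
  have h := hgD (Fin.snoc (Function.update x (Fin.last m) u) v)
  set z : Fin (m+2) → S := Fin.snoc (Function.update x (Fin.last m) u) v with hz
  have h1 : (fun i : Fin (m+1) => z i.castSucc) = Function.update x (Fin.last m) u := by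
    funext i; simp only [hz, Fin.snoc_castSucc]
  have h2 : z (Fin.last (m+1)) = v := by simp only [hz, Fin.snoc_last]
  have h3 : z (Fin.castSucc (Fin.last m)) = u := by
    simp only [hz, Fin.snoc_castSucc, Function.update_self]
  have h4 : ∀ i : Fin m, z i.castSucc.castSucc = x i.castSucc := by
    intro i
    simp only [hz, Fin.snoc_castSucc, Function.update_of_ne (Fin.castSucc_lt_last i).ne]
  rw [Dop, h1, h2, h3] at h
  rw [Function.update_idem, Function.update_idem] at h
  calc ‖g (Function.update x (Fin.last m) (u + v)) - g (Function.update x (Fin.last m) u)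
      - g (Function.update x (Fin.last m) v)‖
      ≤ ε * (∏ i : Fin m, ‖z i.castSucc.castSucc‖ ^ r) * (‖u‖ ^ r + ‖v‖ ^ r) := h
    _ = ε * (∏ i : Fin m, ‖x i.castSucc‖ ^ r) * (‖u‖ ^ r + ‖v‖ ^ r) := by
        rw [Finset.prod_congr rfl (fun i _ => by rw [h4 i])]

lemma aux_conj (m : ℕ) (g : (Fin (m+1) → S) → B)
    (hgsym : ∀ (x : Fin (m + 1) → S) (σ : Equiv.Perm (Fin (m + 1))), g (x ∘ σ) = g x)
    (j : Fin (m+1)) (x : Fin (m+1) → S) (w : S) :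
    g (Function.update x j w)
      = g (Function.update (x ∘ (Equiv.swap j (Fin.last m))) (Fin.last m) w) := by
  set σ := Equiv.swap j (Fin.last m) with hσ
  have key : Function.update x j w ∘ σ = Function.update (x ∘ σ) (Fin.last m) w := by
    funext i
    rcases eq_or_ne i (Fin.last m) with rfl | hi
    · show Function.update x j w (σ (Fin.last m)) = _
      rw [hσ, Equiv.swap_apply_right, Function.update_self, Function.update_self]
    · have : σ i ≠ j := by
        intro hc
        apply hi
        have := σ.injective (a₁ := i) (a₂ := Fin.last m)
        apply this
        rw [hc, hσ, Equiv.swap_apply_right]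
      simp [Function.update_of_ne hi, Function.update_of_ne this, Function.comp]
  rw [← key, hgsym]

lemma aux_key (m : ℕ) (ε r : ℝ) (g : (Fin (m+1) → S) → B)
    (hgsym : ∀ (x : Fin (m + 1) → S) (σ : Equiv.Perm (Fin (m + 1))), g (x ∘ σ) = g x)
    (hgD : ∀ z : Fin (m + 2) → S,
      ‖Dop m g z‖ ≤ ε * (∏ i : Fin m, ‖z i.castSucc.castSucc‖ ^ r) *
        (‖z (Fin.castSucc (Fin.last m))‖ ^ r + ‖z (Fin.last (m + 1))‖ ^ r))
    (j : Fin (m+1)) (x : Fin (m+1) → S) (u v : S) :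
    ‖g (Function.update x j (u + v)) - g (Function.update x j u)
      - g (Function.update x j v)‖
      ≤ ε * (∏ i : Fin m, ‖x ((Equiv.swap j (Fin.last m)) i.castSucc)‖ ^ r)
        * (‖u‖ ^ r + ‖v‖ ^ r) := by
  rw [aux_conj m g hgsym j x (u+v), aux_conj m g hgsym j x u, aux_conj m g hgsym j x v]
  exact aux_keyD m ε r g hgD (x ∘ (Equiv.swap j (Fin.last m))) u v

lemma aux_key2 (m : ℕ) (ε r : ℝ) (g : (Fin (m+1) → S) → B)
    (hgsym : ∀ (x : Fin (m + 1) → S) (σ : Equiv.Perm (Fin (m + 1))), g (x ∘ σ) = g x)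
    (hgD : ∀ z : Fin (m + 2) → S,
      ‖Dop m g z‖ ≤ ε * (∏ i : Fin m, ‖z i.castSucc.castSucc‖ ^ r) *
        (‖z (Fin.castSucc (Fin.last m))‖ ^ r + ‖z (Fin.last (m + 1))‖ ^ r))
    (j : Fin (m+1)) (x : Fin (m+1) → S) :
    ‖g x - (2:ℝ) • g (Function.update x j ((2:ℝ)⁻¹ • x j))‖
      ≤ ε * (2 * ((2:ℝ) ^ r)⁻¹) * ∏ i, ‖x i‖ ^ r := by
  set σ := Equiv.swap j (Fin.last m) with hσ
  have h := aux_key m ε r g hgsym hgD j x ((2:ℝ)⁻¹ • x j) ((2:ℝ)⁻¹ • x j)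
  have hx : Function.update x j ((2:ℝ)⁻¹ • x j + (2:ℝ)⁻¹ • x j) = x := by
    rw [← add_smul]
    norm_num
  have h2 : g x - (2:ℝ) • g (Function.update x j ((2:ℝ)⁻¹ • x j))
      = g (Function.update x j ((2:ℝ)⁻¹ • x j + (2:ℝ)⁻¹ • x j))
        - g (Function.update x j ((2:ℝ)⁻¹ • x j)) - g (Function.update x j ((2:ℝ)⁻¹ • x j)) := by
    rw [hx, two_smul, sub_sub, sub_right_inj]
  rw [h2]
  refine h.trans (le_of_eq ?_)
  have hprod : (∏ i : Fin m, ‖x (σ i.castSucc)‖ ^ r) * ‖x j‖ ^ r = ∏ i, ‖x i‖ ^ r := by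
    have e1 : ∏ i : Fin (m+1), ‖x (σ i)‖ ^ r
        = (∏ i : Fin m, ‖x (σ i.castSucc)‖ ^ r) * ‖x (σ (Fin.last m))‖ ^ r :=
      Fin.prod_univ_castSucc _
    have e2 : ∏ i : Fin (m+1), ‖x (σ i)‖ ^ r = ∏ i, ‖x i‖ ^ r :=
      Equiv.prod_comp σ (fun i => ‖x i‖ ^ r)
    rw [← e2, e1, hσ, Equiv.swap_apply_right]
  rw [aux_half]
  rw [← hprod]
  ring

/-- Halve the first `j` coordinates of `x`. -/
noncomputable def Yfun {m : ℕ} (x : Fin (m+1) → S) (j : ℕ) : Fin (m+1) → S :=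
  fun i => if (i : ℕ) < j then (2:ℝ)⁻¹ • x i else x i

lemma aux_Y_zero {m : ℕ} (x : Fin (m+1) → S) : Yfun x 0 = x := by
  funext i; simp [Yfun]

lemma aux_Y_last {m : ℕ} (x : Fin (m+1) → S) :
    Yfun x (m+1) = fun i => (2:ℝ)⁻¹ • x i := by
  funext i; simp [Yfun, i.isLt]

lemma aux_Y_at {m : ℕ} (x : Fin (m+1) → S) (j : ℕ) (hj : j < m+1) :
    Yfun x j ⟨j, hj⟩ = x ⟨j, hj⟩ := by
  simp [Yfun]

lemma aux_Y_succ {m : ℕ} (x : Fin (m+1) → S) (j : ℕ) (hj : j < m+1) :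
    Yfun x (j+1) = Function.update (Yfun x j) ⟨j, hj⟩ ((2:ℝ)⁻¹ • x ⟨j, hj⟩) := by
  funext i
  rcases eq_or_ne i ⟨j, hj⟩ with rfl | hi
  · simp [Yfun]
  · have hvi : (i:ℕ) ≠ j := fun hc => hi (Fin.ext hc)
    rw [Function.update_of_ne hi]
    simp only [Yfun]
    by_cases h : (i:ℕ) < j
    · simp [h, Nat.lt_succ_of_lt h]
    · simp [h, show ¬((i:ℕ) < j + 1) by omega]

lemma aux_prodY {m : ℕ} (r : ℝ) (x : Fin (m+1) → S) :
    ∀ j, j ≤ m+1 → ∏ i, ‖Yfun x j i‖ ^ r = (((2:ℝ) ^ r)⁻¹) ^ j * ∏ i, ‖x i‖ ^ r := by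
  intro j
  induction j with
  | zero => intro _; simp [aux_Y_zero]
  | succ j ih =>
    intro hj1
    have hj : j < m + 1 := by omega
    set jf : Fin (m+1) := ⟨j, hj⟩ with hjf
    have e1 : (fun i => ‖Yfun x (j+1) i‖ ^ r)
        = Function.update (fun i => ‖Yfun x j i‖ ^ r) jf (‖(2:ℝ)⁻¹ • x jf‖ ^ r) := by
      funext i
      rcases eq_or_ne i jf with rfl | hi
      · rw [Function.update_self, aux_Y_succ x j hj, Function.update_self]
      · rw [Function.update_of_ne hi, aux_Y_succ x j hj, Function.update_of_ne hi]
    calc ∏ i, ‖Yfun x (j+1) i‖ ^ r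
        = ∏ i, Function.update (fun i => ‖Yfun x j i‖ ^ r) jf (‖(2:ℝ)⁻¹ • x jf‖ ^ r) i := by
          rw [← e1]
      _ = ‖(2:ℝ)⁻¹ • x jf‖ ^ r * ∏ i ∈ univ.erase jf, ‖Yfun x j i‖ ^ r := by
          rw [Finset.prod_update_of_mem (mem_univ jf), Finset.sdiff_singleton_eq_erase]
      _ = ((2:ℝ) ^ r)⁻¹ * (‖Yfun x j jf‖ ^ r * ∏ i ∈ univ.erase jf, ‖Yfun x j i‖ ^ r) := by
          rw [aux_half, aux_Y_at x j hj, mul_assoc]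
      _ = ((2:ℝ) ^ r)⁻¹ * ∏ i, ‖Yfun x j i‖ ^ r := by
          rw [Finset.mul_prod_erase univ (fun i => ‖Yfun x j i‖ ^ r) (mem_univ jf)]
      _ = (((2:ℝ) ^ r)⁻¹) ^ (j+1) * ∏ i, ‖x i‖ ^ r := by
          rw [ih (by omega), pow_succ]; ring

lemma aux_tele (m : ℕ) (ε r : ℝ) (g : (Fin (m+1) → S) → B)
    (hkey2 : ∀ (j : Fin (m+1)) (x : Fin (m+1) → S),
      ‖g x - (2:ℝ) • g (Function.update x j ((2:ℝ)⁻¹ • x j))‖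
        ≤ ε * (2 * ((2:ℝ) ^ r)⁻¹) * ∏ i, ‖x i‖ ^ r)
    (x : Fin (m+1) → S) :
    ∀ j, j ≤ m+1 → ‖g x - (2:ℝ) ^ j • g (Yfun x j)‖
      ≤ ε * (∑ t ∈ range j, (2 * ((2:ℝ) ^ r)⁻¹) ^ (t+1)) * ∏ i, ‖x i‖ ^ r := by
  set Q : ℝ := 2 * ((2:ℝ) ^ r)⁻¹ with hQ
  intro j
  induction j with
  | zero => intro _; simp [aux_Y_zero]
  | succ j ih =>
    intro hj1
    have hj : j < m + 1 := by omega
    set jf : Fin (m+1) := ⟨j, hj⟩ with hjf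
    have step : ‖(2:ℝ) ^ j • g (Yfun x j) - (2:ℝ) ^ (j+1) • g (Yfun x (j+1))‖
        ≤ ε * Q ^ (j+1) * ∏ i, ‖x i‖ ^ r := by
      have e : (2:ℝ) ^ j • g (Yfun x j) - (2:ℝ) ^ (j+1) • g (Yfun x (j+1))
          = (2:ℝ) ^ j • (g (Yfun x j) - (2:ℝ) • g (Yfun x (j+1))) := by
        rw [smul_sub, smul_smul, ← pow_succ]
      rw [e, norm_smul, Real.norm_eq_abs, abs_of_nonneg (by positivity : (0:ℝ) ≤ 2 ^ j)]
      have h2 := hkey2 jf (Yfun x j)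
      rw [aux_Y_at x j hj] at h2
      rw [← aux_Y_succ x j hj] at h2
      calc (2:ℝ) ^ j * ‖g (Yfun x j) - (2:ℝ) • g (Yfun x (j+1))‖
          ≤ (2:ℝ) ^ j * (ε * Q * ∏ i, ‖Yfun x j i‖ ^ r) := by
            apply mul_le_mul_of_nonneg_left h2 (by positivity)
        _ = ε * Q ^ (j+1) * ∏ i, ‖x i‖ ^ r := by
            rw [aux_prodY r x j (by omega), hQ]
            ring
    calc ‖g x - (2:ℝ) ^ (j+1) • g (Yfun x (j+1))‖
        ≤ ‖g x - (2:ℝ) ^ j • g (Yfun x j)‖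
          + ‖(2:ℝ) ^ j • g (Yfun x j) - (2:ℝ) ^ (j+1) • g (Yfun x (j+1))‖ :=
          norm_sub_le_norm_sub_add_norm_sub _ _ _
      _ ≤ ε * (∑ t ∈ range j, Q ^ (t+1)) * ∏ i, ‖x i‖ ^ r
          + ε * Q ^ (j+1) * ∏ i, ‖x i‖ ^ r := add_le_add (ih (by omega)) step
      _ = ε * (∑ t ∈ range (j+1), Q ^ (t+1)) * ∏ i, ‖x i‖ ^ r := by
          rw [sum_range_succ]; ring

lemma aux_add_zero (m : ℕ) (a' : (Fin (m+1) → S) → B)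
    (hadd : ∀ (x : Fin (m+1) → S) (i : Fin (m+1)) (u v : S),
      a' (Function.update x i (u + v)) = a' (Function.update x i u) + a' (Function.update x i v))
    (x : Fin (m+1) → S) (i : Fin (m+1)) (hxi : x i = 0) : a' x = 0 := by
  have h := hadd x i 0 0
  rw [add_zero] at h
  have hx : Function.update x i 0 = x := by rw [← hxi, Function.update_eq_self]
  rw [hx] at h
  exact (left_eq_add.mp h)

lemma aux_add_half (m : ℕ) (a' : (Fin (m+1) → S) → B)
    (hadd : ∀ (x : Fin (m+1) → S) (i : Fin (m+1)) (u v : S),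
      a' (Function.update x i (u + v)) = a' (Function.update x i u) + a' (Function.update x i v))
    (x : Fin (m+1) → S) :
    a' x = (2:ℝ) ^ (m+1) • a' (fun i => (2:ℝ)⁻¹ • x i) := by
  have tele : ∀ j, j ≤ m+1 → a' x = (2:ℝ) ^ j • a' (Yfun x j) := by
    intro j
    induction j with
    | zero => intro _; rw [aux_Y_zero, pow_zero, one_smul]
    | succ j ih =>
      intro hj1
      have hj : j < m + 1 := by omega
      have hsum : (2:ℝ)⁻¹ • x ⟨j, hj⟩ + (2:ℝ)⁻¹ • x ⟨j, hj⟩ = x ⟨j, hj⟩ := by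
        rw [← add_smul]; norm_num
      have e2 : a' (Yfun x j) = (2:ℝ) • a' (Yfun x (j+1)) := by
        have h := hadd (Yfun x j) ⟨j, hj⟩ ((2:ℝ)⁻¹ • x ⟨j, hj⟩) ((2:ℝ)⁻¹ • x ⟨j, hj⟩)
        rw [hsum, ← aux_Y_at x j hj, Function.update_eq_self, aux_Y_at x j hj,
          ← aux_Y_succ x j hj] at h
        rw [h, two_smul]
      rw [ih (by omega), e2, smul_smul, ← pow_succ]
  have h := tele (m+1) le_rfl
  rw [aux_Y_last] at h
  exact h

lemma aux_add_scale (m : ℕ) (a' : (Fin (m+1) → S) → B)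
    (hadd : ∀ (x : Fin (m+1) → S) (i : Fin (m+1)) (u v : S),
      a' (Function.update x i (u + v)) = a' (Function.update x i u) + a' (Function.update x i v))
    (x : Fin (m+1) → S) (k : ℕ) :
    a' x = ((2:ℝ) ^ ((m+1)*k)) • a' (fun i => ((2:ℝ) ^ k)⁻¹ • x i) := by
  induction k with
  | zero => simp
  | succ k ih =>
    have hx : (fun i => ((2:ℝ) ^ (k+1))⁻¹ • x i)
        = fun i => (2:ℝ)⁻¹ • (((2:ℝ) ^ k)⁻¹ • x i) := by
      funext i
      rw [smul_smul, ← mul_inv, pow_succ, mul_comm]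
    rw [ih, aux_add_half m a' hadd (fun i => ((2:ℝ) ^ k)⁻¹ • x i), ← hx, smul_smul, ← pow_add,
      show (m+1)*k + (m+1) = (m+1)*(k+1) by ring]

end AuxHU

/-- **Corollary 2.3, case `r > 1`.** If `g : Sⁿ → B` (`n = m + 1`) is symmetric with
`‖D_n g (x₁, …, x_{n+1})‖ ≤ ε ‖x₁‖^r ⋯ ‖x_{n-1}‖^r (‖x_n‖^r + ‖x_{n+1}‖^r)`, then
`a y := lim 2^{nk} g(2^{-k} y)` defines a symmetric `n`-additive map with
`‖g x - a x‖ ≤ ε 2^{(n-1)(r-1)+1} / |2^r - 2| ⋅ ‖x₁‖^r ⋯ ‖x_n‖^r` for nonzero `xᵢ`,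
the unique `n`-additive map with this property. -/
theorem stmt7 {S B : Type*} [NormedAddCommGroup S] [NormedSpace ℝ S]
    [NormedAddCommGroup B] [NormedSpace ℝ B] [CompleteSpace B]
    (m : ℕ) (ε r : ℝ) (hε : 0 < ε) (hr : 1 < r)
    (g : (Fin (m + 1) → S) → B)
    (hgsym : ∀ (x : Fin (m + 1) → S) (σ : Equiv.Perm (Fin (m + 1))), g (x ∘ σ) = g x)
    (hgD : ∀ z : Fin (m + 2) → S,
      ‖Dop m g z‖ ≤ ε * (∏ i : Fin m, ‖z i.castSucc.castSucc‖ ^ r) *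
        (‖z (Fin.castSucc (Fin.last m))‖ ^ r + ‖z (Fin.last (m + 1))‖ ^ r)) :
    ∃ a : (Fin (m + 1) → S) → B,
      (∀ y : Fin (m + 1) → S,
        Filter.Tendsto
          (fun k : ℕ => ((2 : ℝ) ^ ((m + 1) * k)) • g (fun i => ((2 : ℝ) ^ k)⁻¹ • y i))
          Filter.atTop (nhds (a y))) ∧
      (∀ (x : Fin (m + 1) → S) (σ : Equiv.Perm (Fin (m + 1))), a (x ∘ σ) = a x) ∧
      (∀ (x : Fin (m + 1) → S) (i : Fin (m + 1)) (u v : S),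
        a (Function.update x i (u + v)) = a (Function.update x i u) + a (Function.update x i v)) ∧
      (∀ x : Fin (m + 1) → S, (∀ i, x i ≠ 0) →
        ‖g x - a x‖ ≤ ε * (2 : ℝ) ^ ((m : ℝ) * (r - 1) + 1) / |(2 : ℝ) ^ r - 2| *
          ∏ i, ‖x i‖ ^ r) ∧
      (∀ a' : (Fin (m + 1) → S) → B,
        (∀ (x : Fin (m + 1) → S) (i : Fin (m + 1)) (u v : S),
          a' (Function.update x i (u + v))
            = a' (Function.update x i u) + a' (Function.update x i v)) →
        (∀ x : Fin (m + 1) → S, (∀ i, x i ≠ 0) →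
          ‖g x - a' x‖ ≤ ε * (2 : ℝ) ^ ((m : ℝ) * (r - 1) + 1) / |(2 : ℝ) ^ r - 2| *
            ∏ i, ‖x i‖ ^ r) → a' = a) := by
  have hR : (0:ℝ) < (2:ℝ) ^ r := Real.rpow_pos_of_pos two_pos r
  have h2R : (2:ℝ) < (2:ℝ) ^ r := by
    nth_rewrite 1 [← Real.rpow_one 2]
    exact (Real.rpow_lt_rpow_left_iff (by norm_num)).mpr hr
  set K : ℝ := ε * (2:ℝ) ^ ((m:ℝ) * (r - 1) + 1) / |(2:ℝ) ^ r - 2| with hK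
  set Q : ℝ := 2 * ((2:ℝ) ^ r)⁻¹ with hQdef
  have hQpos : 0 < Q := by positivity
  have hQ1 : Q < 1 := by
    rw [hQdef, ← div_eq_mul_inv]
    exact (div_lt_one hR).mpr h2R
  have hQQ1 : Q ^ (m+1) < 1 := pow_lt_one₀ hQpos.le hQ1 (Nat.succ_ne_zero m)
  have hQQpos : 0 < Q ^ (m+1) := pow_pos hQpos _
  set Sq : ℝ := ∑ t ∈ Finset.range (m+1), Q ^ (t+1) with hSq
  have hkey2 := aux_key2 m ε r g hgsym hgD
  have key3 : ∀ x : Fin (m+1) → S,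
      ‖g x - (2:ℝ) ^ (m+1) • g (fun i => (2:ℝ)⁻¹ • x i)‖ ≤ ε * Sq * ∏ i, ‖x i‖ ^ r := by
    intro x
    have h := aux_tele m ε r g hkey2 x (m+1) le_rfl
    rwa [aux_Y_last] at h
  set F : (Fin (m + 1) → S) → ℕ → B :=
    fun y k => ((2 : ℝ) ^ ((m + 1) * k)) • g (fun i => ((2 : ℝ) ^ k)⁻¹ • y i) with hF
  have hstep : ∀ (x : Fin (m+1) → S) (k : ℕ),
      ‖F x k - F x (k+1)‖ ≤ (ε * Sq * ∏ i, ‖x i‖ ^ r) * (Q ^ (m+1)) ^ k := by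
    intro x k
    have hx : (fun i => ((2:ℝ) ^ (k+1))⁻¹ • x i)
        = fun i => (2:ℝ)⁻¹ • (((2:ℝ) ^ k)⁻¹ • x i) := by
      funext i; rw [smul_smul, ← mul_inv, pow_succ, mul_comm]
    have e : F x k - F x (k+1)
        = (2:ℝ) ^ ((m+1)*k) • (g (fun i => ((2:ℝ) ^ k)⁻¹ • x i)
            - (2:ℝ) ^ (m+1) • g (fun i => (2:ℝ)⁻¹ • (((2:ℝ) ^ k)⁻¹ • x i))) := by
      simp only [hF]
      rw [hx, smul_sub, smul_smul, ← pow_add, show (m+1)*k + (m+1) = (m+1)*(k+1) by ring]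
    rw [e, norm_smul, Real.norm_eq_abs, abs_of_nonneg (by positivity : (0:ℝ) ≤ 2 ^ ((m+1)*k))]
    have hp : ∏ i, ‖((2:ℝ) ^ k)⁻¹ • x i‖ ^ r
        = ((((2:ℝ) ^ r)⁻¹) ^ k) ^ (m+1) * ∏ i, ‖x i‖ ^ r := aux_prod_smul r k (m+1) x
    calc (2:ℝ) ^ ((m+1)*k) * ‖g (fun i => ((2:ℝ) ^ k)⁻¹ • x i)
            - (2:ℝ) ^ (m+1) • g (fun i => (2:ℝ)⁻¹ • (((2:ℝ) ^ k)⁻¹ • x i))‖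
        ≤ (2:ℝ) ^ ((m+1)*k) * (ε * Sq * ∏ i, ‖((2:ℝ) ^ k)⁻¹ • x i‖ ^ r) :=
          mul_le_mul_of_nonneg_left (key3 _) (by positivity)
      _ = (ε * Sq * ∏ i, ‖x i‖ ^ r) * (Q ^ (m+1)) ^ k := by
          rw [hp, hQdef]
          ring
  have hex : ∀ y : Fin (m+1) → S, ∃ b : B,
      Filter.Tendsto (fun k : ℕ => ((2 : ℝ) ^ ((m + 1) * k)) • g (fun i => ((2 : ℝ) ^ k)⁻¹ • y i))
        Filter.atTop (nhds b) := by
    intro y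
    apply cauchySeq_tendsto_of_complete
    exact cauchySeq_of_le_geometric (Q ^ (m+1)) _ hQQ1
      (fun k => by rw [dist_eq_norm]; exact hstep y k)
  choose a ha using hex
  have hF0 : ∀ x : Fin (m+1) → S, F x 0 = g x := by
    intro x
    simp [hF]
  have hP : ∀ x : Fin (m+1) → S, (0:ℝ) ≤ ∏ i, ‖x i‖ ^ r :=
    fun x => Finset.prod_nonneg fun i _ => Real.rpow_nonneg (norm_nonneg _) r
  have hbound : ∀ x : Fin (m+1) → S, ‖g x - a x‖ ≤ K * ∏ i, ‖x i‖ ^ r := by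
    intro x
    have hd := dist_le_of_le_geometric_of_tendsto₀ (Q ^ (m+1)) (ε * Sq * ∏ i, ‖x i‖ ^ r) hQQ1
      (fun k => by rw [dist_eq_norm]; exact hstep x k) (ha x)
    rw [dist_eq_norm] at hd
    have hgx : (2:ℝ) ^ ((m + 1) * 0) • g (fun i => ((2:ℝ) ^ (0:ℕ))⁻¹ • x i) = g x := by simp
    rw [hgx] at hd
    refine hd.trans ?_
    have h1mQ : (0:ℝ) < 1 - Q := by linarith
    have h1mQQ : (0:ℝ) < 1 - Q ^ (m+1) := by linarith
    have hSqe : Sq = Q * ((Q ^ (m+1) - 1) / (Q - 1)) := by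
      rw [hSq, ← geom_sum_eq hQ1.ne (m+1), Finset.mul_sum]
      exact Finset.sum_congr rfl fun t _ => pow_succ' Q t
    have he : ε * Sq * (∏ i, ‖x i‖ ^ r) / (1 - Q ^ (m+1))
        = (ε * (Q / (1 - Q))) * ∏ i, ‖x i‖ ^ r := by
      rw [hSqe]
      have d1 : Q - 1 ≠ 0 := sub_ne_zero_of_ne hQ1.ne
      have d2 : (1:ℝ) - Q ^ (m+1) ≠ 0 := h1mQQ.ne'
      have d3 : (1:ℝ) - Q ≠ 0 := h1mQ.ne'
      field_simp
      try ring
    rw [he]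
    apply mul_le_mul_of_nonneg_right ?_ (hP x)
    have habs : |(2:ℝ) ^ r - 2| = (2:ℝ) ^ r - 2 := abs_of_pos (by linarith)
    have hQe : ε * (Q / (1 - Q)) = ε * 2 / ((2:ℝ) ^ r - 2) := by
      rw [hQdef]
      have d4 : (2:ℝ) ^ r ≠ 0 := hR.ne'
      have d5 : (2:ℝ) ^ r - 2 ≠ 0 := by linarith
      have d6 : (1:ℝ) - 2 * ((2:ℝ) ^ r)⁻¹ ≠ 0 := by
        rw [hQdef] at hQ1; linarith
      field_simp
      try ring
    have hpw : (2:ℝ) ^ ((m:ℝ) * (r - 1) + 1) = (2:ℝ) ^ ((m:ℝ) * (r - 1)) * 2 :=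
      by rw [Real.rpow_add two_pos, Real.rpow_one]
    have h1le : (1:ℝ) ≤ (2:ℝ) ^ ((m:ℝ) * (r - 1)) := by
      have h0t : (0:ℝ) ≤ (m:ℝ) * (r - 1) := mul_nonneg (Nat.cast_nonneg m) (by linarith)
      have := (Real.rpow_le_rpow_left_iff (x := 2) (y := 0) (by norm_num : (1:ℝ) < 2)).mpr h0t
      rwa [Real.rpow_zero] at this
    rw [hQe, hK, habs, hpw]
    rw [div_le_div_iff₀ (by linarith) (by linarith)]
    nlinarith [mul_pos hε (by linarith : (0:ℝ) < (2:ℝ) ^ r - 2)]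
  have haddA : ∀ (x : Fin (m + 1) → S) (j : Fin (m + 1)) (u v : S),
      a (Function.update x j (u + v))
        = a (Function.update x j u) + a (Function.update x j v) := by
    intro x j u v
    set σ := Equiv.swap j (Fin.last m) with hσ
    have hGt : Filter.Tendsto (fun k => F (Function.update x j (u+v)) k
        - F (Function.update x j u) k - F (Function.update x j v) k) Filter.atTop
        (nhds (a (Function.update x j (u+v)) - a (Function.update x j u)
          - a (Function.update x j v))) := ((ha _).sub (ha _)).sub (ha _)
    have hG0 : Filter.Tendsto (fun k => F (Function.update x j (u+v)) k
        - F (Function.update x j u) k - F (Function.update x j v) k) Filter.atTop (nhds 0) := by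
      apply squeeze_zero_norm
        (a := fun k : ℕ => (ε * (∏ i : Fin m, ‖x (σ i.castSucc)‖ ^ r) * (‖u‖ ^ r + ‖v‖ ^ r))
          * (Q ^ (m+1)) ^ k)
      · intro k
        have hrepr : ∀ w : S, (fun i => ((2:ℝ) ^ k)⁻¹ • (Function.update x j w) i)
            = Function.update (fun i => ((2:ℝ) ^ k)⁻¹ • x i) j (((2:ℝ) ^ k)⁻¹ • w) :=
          fun w => aux_smul_update _ x j w
        have e : F (Function.update x j (u+v)) k - F (Function.update x j u) k
              - F (Function.update x j v) k
            = (2:ℝ) ^ ((m+1)*k) • (g (Function.update (fun i => ((2:ℝ) ^ k)⁻¹ • x i) j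
                (((2:ℝ) ^ k)⁻¹ • u + ((2:ℝ) ^ k)⁻¹ • v))
              - g (Function.update (fun i => ((2:ℝ) ^ k)⁻¹ • x i) j (((2:ℝ) ^ k)⁻¹ • u))
              - g (Function.update (fun i => ((2:ℝ) ^ k)⁻¹ • x i) j (((2:ℝ) ^ k)⁻¹ • v))) := by
          simp only [hF]
          rw [hrepr (u+v), hrepr u, hrepr v, smul_add, smul_sub, smul_sub]
        rw [e, norm_smul, Real.norm_eq_abs,
          abs_of_nonneg (by positivity : (0:ℝ) ≤ 2 ^ ((m+1)*k))]
        have hb := aux_key m ε r g hgsym hgD j (fun i => ((2:ℝ) ^ k)⁻¹ • x i)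
          (((2:ℝ) ^ k)⁻¹ • u) (((2:ℝ) ^ k)⁻¹ • v)
        have hpσ : ∏ i : Fin m, ‖((2:ℝ) ^ k)⁻¹ • x (σ i.castSucc)‖ ^ r
            = ((((2:ℝ) ^ r)⁻¹) ^ k) ^ m * ∏ i : Fin m, ‖x (σ i.castSucc)‖ ^ r :=
          aux_prod_smul r k m (fun i => x (σ i.castSucc))
        calc (2:ℝ) ^ ((m+1)*k) * ‖g (Function.update (fun i => ((2:ℝ) ^ k)⁻¹ • x i) j
                (((2:ℝ) ^ k)⁻¹ • u + ((2:ℝ) ^ k)⁻¹ • v))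
              - g (Function.update (fun i => ((2:ℝ) ^ k)⁻¹ • x i) j (((2:ℝ) ^ k)⁻¹ • u))
              - g (Function.update (fun i => ((2:ℝ) ^ k)⁻¹ • x i) j (((2:ℝ) ^ k)⁻¹ • v))‖
            ≤ (2:ℝ) ^ ((m+1)*k) * (ε * (∏ i : Fin m,
                ‖((2:ℝ) ^ k)⁻¹ • x (σ i.castSucc)‖ ^ r)
              * (‖((2:ℝ) ^ k)⁻¹ • u‖ ^ r + ‖((2:ℝ) ^ k)⁻¹ • v‖ ^ r)) :=
              mul_le_mul_of_nonneg_left hb (by positivity)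
          _ = (ε * (∏ i : Fin m, ‖x (σ i.castSucc)‖ ^ r) * (‖u‖ ^ r + ‖v‖ ^ r))
              * (Q ^ (m+1)) ^ k := by
              rw [hpσ, aux_norm_inv_pow_smul, aux_norm_inv_pow_smul, hQdef]
              ring
      · have h0 : Filter.Tendsto (fun k : ℕ => (Q ^ (m+1)) ^ k) Filter.atTop (nhds 0) :=
          tendsto_pow_atTop_nhds_zero_of_lt_one hQQpos.le hQQ1
        have := h0.const_mul (ε * (∏ i : Fin m, ‖x (σ i.castSucc)‖ ^ r) * (‖u‖ ^ r + ‖v‖ ^ r))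
        simpa using this
    have h := tendsto_nhds_unique hGt hG0
    rwa [sub_sub, sub_eq_zero] at h
  have hsymA : ∀ (x : Fin (m + 1) → S) (σ : Equiv.Perm (Fin (m + 1))), a (x ∘ σ) = a x := by
    intro x σ
    have he : (fun k : ℕ => ((2 : ℝ) ^ ((m + 1) * k)) • g (fun i => ((2 : ℝ) ^ k)⁻¹ • (x ∘ σ) i))
        = (fun k : ℕ => ((2 : ℝ) ^ ((m + 1) * k)) • g (fun i => ((2 : ℝ) ^ k)⁻¹ • x i)) := by
      funext k
      congr 1
      have e2 : (fun i => ((2:ℝ) ^ k)⁻¹ • (x ∘ σ) i) = (fun i => ((2:ℝ) ^ k)⁻¹ • x i) ∘ σ := rfl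
      rw [e2, hgsym]
    have h1 := ha (x ∘ σ)
    rw [he] at h1
    exact tendsto_nhds_unique h1 (ha x)
  refine ⟨a, ha, hsymA, haddA, fun x _ => hbound x, ?_⟩
  intro a' hadd' hbnd'
  funext x
  by_cases hx : ∀ i, x i ≠ 0
  · have key : ∀ k : ℕ, ‖a' x - a x‖ ≤ (2 * K * ∏ i, ‖x i‖ ^ r) * (Q ^ (m+1)) ^ k := by
      intro k
      have hy : ∀ i, ((2:ℝ) ^ k)⁻¹ • x i ≠ 0 :=
        fun i => smul_ne_zero (inv_ne_zero (by positivity)) (hx i)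
      have e : a' x - a x = (2:ℝ) ^ ((m+1)*k) •
          (a' (fun i => ((2:ℝ) ^ k)⁻¹ • x i) - a (fun i => ((2:ℝ) ^ k)⁻¹ • x i)) := by
        rw [aux_add_scale m a' hadd' x k, aux_add_scale m a haddA x k, smul_sub]
      rw [e, norm_smul, Real.norm_eq_abs,
        abs_of_nonneg (by positivity : (0:ℝ) ≤ 2 ^ ((m+1)*k))]
      have h1 : ‖a' (fun i => ((2:ℝ) ^ k)⁻¹ • x i) - a (fun i => ((2:ℝ) ^ k)⁻¹ • x i)‖
          ≤ 2 * K * ∏ i, ‖((2:ℝ) ^ k)⁻¹ • x i‖ ^ r := by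
        calc ‖a' (fun i => ((2:ℝ) ^ k)⁻¹ • x i) - a (fun i => ((2:ℝ) ^ k)⁻¹ • x i)‖
            ≤ ‖a' (fun i => ((2:ℝ) ^ k)⁻¹ • x i) - g (fun i => ((2:ℝ) ^ k)⁻¹ • x i)‖
              + ‖g (fun i => ((2:ℝ) ^ k)⁻¹ • x i) - a (fun i => ((2:ℝ) ^ k)⁻¹ • x i)‖ :=
              norm_sub_le_norm_sub_add_norm_sub _ _ _
          _ ≤ K * (∏ i, ‖((2:ℝ) ^ k)⁻¹ • x i‖ ^ r) + K * (∏ i, ‖((2:ℝ) ^ k)⁻¹ • x i‖ ^ r) := by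
              apply add_le_add
              · rw [norm_sub_rev]
                exact hbnd' _ hy
              · exact hbound _
          _ = 2 * K * ∏ i, ‖((2:ℝ) ^ k)⁻¹ • x i‖ ^ r := by ring
      calc (2:ℝ) ^ ((m+1)*k)
            * ‖a' (fun i => ((2:ℝ) ^ k)⁻¹ • x i) - a (fun i => ((2:ℝ) ^ k)⁻¹ • x i)‖
          ≤ (2:ℝ) ^ ((m+1)*k) * (2 * K * ∏ i, ‖((2:ℝ) ^ k)⁻¹ • x i‖ ^ r) :=
            mul_le_mul_of_nonneg_left h1 (by positivity)
        _ = (2 * K * ∏ i, ‖x i‖ ^ r) * (Q ^ (m+1)) ^ k := by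
            rw [aux_prod_smul r k (m+1) x, hQdef]
            ring
    have h0 : Filter.Tendsto (fun k : ℕ => (2 * K * ∏ i, ‖x i‖ ^ r) * (Q ^ (m+1)) ^ k)
        Filter.atTop (nhds 0) := by
      have := (tendsto_pow_atTop_nhds_zero_of_lt_one hQQpos.le hQQ1).const_mul
        (2 * K * ∏ i, ‖x i‖ ^ r)
      simpa using this
    have hle : ‖a' x - a x‖ ≤ 0 := ge_of_tendsto h0 (Filter.Eventually.of_forall key)
    have := norm_le_zero_iff.mp hle
    exact sub_eq_zero.mp this
  · push_neg at hx
    obtain ⟨i, hi⟩ := hx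
    rw [aux_add_zero m a' hadd' x i hi, aux_add_zero m a haddA x i hi]
end

section
/- Let n ≥ 2 be an integer, let f : ℝ → ℝ be any function, and let a : ℝ^n → ℝ be a symmetric n-additive mapping. Then m : ℝ → ℝ defined by m(x) := a(1, …, 1, x) − (n−1) f(1) x is an additive mapping, i.e. m(x + y) = m(x) + m(y) for all x, y ∈ ℝ; moreover, if g(x_1, …, x_n) := Σ_{i=1}^{n} x_1 ⋯ x_{i−1} · f(x_i) · x_{i+1} ⋯ x_n and |g(x_1, …, x_n) − a(x_1, …, x_n)| ≤ δ |x_1| ⋯ |x_n| for all x_1, …, x_n ∈ ℝ, then |f(x) − m(x)| ≤ δ |x| for all x ∈ ℝ. -/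
/-- For `n = m + 2 ≥ 2`, any `f : ℝ → ℝ` and any symmetric `n`-additive `a : ℝⁿ → ℝ`, the map
`m(x) := a(1, …, 1, x) - (n-1) f(1) x` is additive; moreover if
`g(x₁, …, x_n) := ∑ᵢ x₁ ⋯ x_{i-1} f(xᵢ) x_{i+1} ⋯ x_n` satisfies
`|g x - a x| ≤ δ |x₁| ⋯ |x_n|` for all `x`, then `|f(x) - m(x)| ≤ δ |x|` for all `x`. -/
theorem stmt10 (m : ℕ) (δ : ℝ) (hδ : 0 < δ) (f : ℝ → ℝ)
    (a : (Fin (m + 2) → ℝ) → ℝ)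
    (hasym : ∀ (x : Fin (m + 2) → ℝ) (σ : Equiv.Perm (Fin (m + 2))), a (x ∘ σ) = a x)
    (haadd : ∀ (x : Fin (m + 2) → ℝ) (i : Fin (m + 2)) (u v : ℝ),
      a (Function.update x i (u + v))
        = a (Function.update x i u) + a (Function.update x i v))
    (mf : ℝ → ℝ)
    (hmf : ∀ x : ℝ,
      mf x = a (Function.update (fun _ => 1) (Fin.last (m + 1)) x) - ((m : ℝ) + 1) * f 1 * x) :
    (∀ x y : ℝ, mf (x + y) = mf x + mf y) ∧
    ((∀ x : Fin (m + 2) → ℝ,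
        |(∑ i, f (x i) * ∏ j ∈ Finset.univ.erase i, x j) - a x| ≤ δ * ∏ i, |x i|) →
      ∀ x : ℝ, |f x - mf x| ≤ δ * |x|) := by
  constructor
  · intro x y
    have h := haadd (fun _ => 1) (Fin.last (m + 1)) x y
    rw [hmf, hmf, hmf, h]
    ring
  · intro hg x
    set v := Function.update (fun _ => (1 : ℝ)) (Fin.last (m + 1)) x with hv
    have hvlast : v (Fin.last (m + 1)) = x := Function.update_self _ _ _
    have hvne : ∀ j, j ≠ Fin.last (m + 1) → v j = 1 :=
      fun j hj => Function.update_of_ne hj _ _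
    have hprod : ∏ i, |v i| = |x| := by
      rw [← Finset.mul_prod_erase _ _ (Finset.mem_univ (Fin.last (m + 1))), hvlast]
      have h1 : ∏ i ∈ Finset.univ.erase (Fin.last (m + 1)), |v i| = 1 :=
        Finset.prod_eq_one fun i hi => by
          rw [hvne i (Finset.ne_of_mem_erase hi), abs_one]
      rw [h1, mul_one]
    have hsum : (∑ i, f (v i) * ∏ j ∈ Finset.univ.erase i, v j)
        = f x + ((m : ℝ) + 1) * f 1 * x := by
      rw [← Finset.add_sum_erase _ _ (Finset.mem_univ (Fin.last (m + 1)))]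
      have h1 : f (v (Fin.last (m + 1))) *
          ∏ j ∈ Finset.univ.erase (Fin.last (m + 1)), v j = f x := by
        rw [hvlast]
        have : ∏ j ∈ Finset.univ.erase (Fin.last (m + 1)), v j = 1 :=
          Finset.prod_eq_one fun j hj => hvne j (Finset.ne_of_mem_erase hj)
        rw [this, mul_one]
      have h2 : ∑ i ∈ Finset.univ.erase (Fin.last (m + 1)),
          f (v i) * ∏ j ∈ Finset.univ.erase i, v j = ((m : ℝ) + 1) * (f 1 * x) := by
        have hterm : ∀ i ∈ Finset.univ.erase (Fin.last (m + 1)),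
            f (v i) * ∏ j ∈ Finset.univ.erase i, v j = f 1 * x := by
          intro i hi
          have hine : i ≠ Fin.last (m + 1) := Finset.ne_of_mem_erase hi
          rw [hvne i hine]
          congr 1
          have hlast : Fin.last (m + 1) ∈ Finset.univ.erase i := by
            simp [Finset.mem_erase, Ne.symm hine]
          rw [← Finset.mul_prod_erase _ _ hlast, hvlast]
          have : ∏ j ∈ (Finset.univ.erase i).erase (Fin.last (m + 1)), v j = 1 :=
            Finset.prod_eq_one fun j hj => hvne j (Finset.ne_of_mem_erase hj)
          rw [this, mul_one]
        rw [Finset.sum_congr rfl hterm, Finset.sum_const,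
          Finset.card_erase_of_mem (Finset.mem_univ _), Finset.card_univ, Fintype.card_fin,
          nsmul_eq_mul]
        push_cast
        ring
      rw [h1, h2]
      ring
    have hkey := hg v
    rw [hsum, hprod] at hkey
    rw [hmf, ← hv]
    have : f x - (a v - ((m : ℝ) + 1) * f 1 * x)
        = f x + ((m : ℝ) + 1) * f 1 * x - a v := by ring
    rw [this]
    exact hkey
end
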